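/- Proposition 2.5, second inequality: Fix an integer m ≥ 1. There exists a constant C, depending only on m, such that for every ℤ³-periodic smooth divergence-free mean-zero field ξ, every ℤ³-periodic smooth divergence-free mean-zero field f, and every field g with g = 𝒫(𝓛_ξ f), one has ⟨g, f⟩_{W^{m,2}}² ≤ C ‖ξ‖_{W^{m,∞}}² ‖f‖_{W^{m,2}}⁴. -/

import Mathlib

open MeasureTheory

noncomputable section

/-- Points of ℝ³ (as `Fin 3 → ℝ`). -/
abbrev V3 := Fin 3 → ℝ
/-- Vector fields on ℝ³. -/
abbrev VF := V3 → V3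

/-- Smoothness of a vector field. -/
def SmoothVF (f : VF) : Prop := ContDiff ℝ (⊤ : ℕ∞) f

/-- Smoothness of a scalar function. -/
def SmoothS (p : V3 → ℝ) : Prop := ContDiff ℝ (⊤ : ℕ∞) p

/-- The periodicity cell [0,1)³. -/
def cube : Set V3 := Set.univ.pi fun _ => Set.Ico (0:ℝ) 1

/-- Partial derivative in the j-th coordinate, acting componentwise. -/
def pd (j : Fin 3) (f : VF) : VF := fun x => fderiv ℝ f x (Pi.single j 1)

/-- Iterated derivative D^α = ∂₁^{α₁}∂₂^{α₂}∂₃^{α₃} for a multi-index α = (α₁, α₂, α₃). -/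
def Dm (α : ℕ × ℕ × ℕ) (f : VF) : VF :=
  (pd 0)^[α.1] ((pd 1)^[α.2.1] ((pd 2)^[α.2.2] f))

/-- The order |α| of a multi-index. -/
def mdeg (α : ℕ × ℕ × ℕ) : ℕ := α.1 + α.2.1 + α.2.2

/-- ℤ³-periodicity of a vector field. -/
def Periodic3 (f : VF) : Prop :=
  ∀ (x : V3) (k : Fin 3 → ℤ), f (x + fun i => (k i : ℝ)) = f x

/-- ℤ³-periodicity of a scalar function. -/
def PeriodicS (p : V3 → ℝ) : Prop :=
  ∀ (x : V3) (k : Fin 3 → ℤ), p (x + fun i => (k i : ℝ)) = p x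

/-- Divergence-free: Σ_j ∂_j f^j ≡ 0. -/
def DivFree (f : VF) : Prop := ∀ x, ∑ j, pd j f x j = 0

/-- Mean-zero over the periodicity cell. -/
def MeanZero (f : VF) : Prop := (∫ x in cube, f x) = 0

/-- The L² inner product over the periodicity cell. -/
def L2inner (f g : VF) : ℝ := ∫ x in cube, ∑ i, f x i * g x i

/-- The finite set of multi-indices of order at most m. -/
def midx (m : ℕ) : Finset (ℕ × ℕ × ℕ) :=
  (Finset.range (m+1) ×ˢ Finset.range (m+1) ×ˢ Finset.range (m+1)).filter
    fun α => mdeg α ≤ m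

lemma midx_nonempty (m : ℕ) : (midx m).Nonempty :=
  ⟨(0,0,0), by
    unfold midx
    exact Finset.mem_filter.mpr ⟨by simp [Finset.mem_product], by simp [mdeg]⟩⟩

/-- The W^{m,2} inner product ⟨f,g⟩_{W^{m,2}} = Σ_{|α|≤m} ⟨D^α f, D^α g⟩_{L²}. -/
def sobInner (m : ℕ) (f g : VF) : ℝ := ∑ α ∈ midx m, L2inner (Dm α f) (Dm α g)

/-- The squared W^{m,2} norm. -/
def sobNormSq (m : ℕ) (f : VF) : ℝ := sobInner m f f

/-- The W^{k,∞} norm: max over |α| ≤ k of sup_x |D^α ξ(x)|. -/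
def WinfNorm (k : ℕ) (ξ : VF) : ℝ :=
  (midx k).sup' (midx_nonempty k) fun α => ⨆ x, ‖Dm α ξ x‖

/-- The transport operator 𝓛_ξ f = Σ_j ξ^j ∂_j f. -/
def transport (ξ f : VF) : VF := fun x => ∑ j, ξ x j • pd j f x

/-- The stretching operator 𝓣_ξ f, with l-th component Σ_j f^j ∂_l ξ^j. -/
def stretch (ξ f : VF) : VF := fun x l => ∑ j, f x j * pd l ξ x j

/-- The L²-adjoint 𝓣*_ξ g, with j-th component Σ_l g^l ∂_l ξ^j. -/
def stretchStar (ξ g : VF) : VF := fun x j => ∑ l, g x l * pd l ξ x j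

/-- The transport–stretching operator B_ξ = 𝓛_ξ + 𝓣_ξ. -/
def Bop (ξ f : VF) : VF := fun x => transport ξ f x + stretch ξ f x

/-- The gradient of a scalar function. -/
def grad (p : V3 → ℝ) : VF := fun x i => fderiv ℝ p x (Pi.single i 1)

/-- `IsLeray u g` : g is the Leray projection 𝒫u of u, i.e. g is a ℤ³-periodic smooth
divergence-free mean-zero field and u − g = ∇p + c for some ℤ³-periodic smooth scalar p
and constant vector c. -/
def IsLeray (u g : VF) : Prop :=
  Periodic3 g ∧ SmoothVF g ∧ DivFree g ∧ MeanZero g ∧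
  ∃ (p : V3 → ℝ) (c : V3), PeriodicS p ∧ SmoothS p ∧
    ∀ x, u x - g x = grad p x + c

/-- The componentwise Laplacian. -/
def lap (f : VF) : VF := fun x => ∑ j, pd j (pd j f) x

/-- The Stokes inner product ⟨u,v⟩_{A^{m/2}}. -/
def stokesInner (m : ℕ) (u v : VF) : ℝ :=
  if m % 2 = 0 then L2inner (lap^[m/2] u) (lap^[m/2] v)
  else ∑ j : Fin 3, L2inner (pd j (lap^[m/2] u)) (pd j (lap^[m/2] v))

/-- A ℤ³-periodic smooth divergence-free mean-zero vector field. -/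
def GoodField (f : VF) : Prop :=
  Periodic3 f ∧ SmoothVF f ∧ DivFree f ∧ MeanZero f

/-!
For `|α| ≤ m`, the gradient-plus-constant part of `𝓛_ξ f` is L²-orthogonal to `D^α f`, because
`D^α f` is periodic, divergence-free and mean-zero; hence `⟨D^α g, D^α f⟩ = ⟨D^α (𝓛_ξ f), D^α f⟩`.
By the Leibniz rule, `D^α (𝓛_ξ f) = 𝓛_ξ (D^α f) + ∑ (D^β ξ)ʲ ∂ⱼ D^γ f`, a sum of at most `5^|α|`
terms with `1 ≤ |β|` and `|γ| + 1 ≤ |α|`. The leading term pairs to zero with `D^α f` since `ξ` is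
divergence-free, and each remaining term pairs with `D^α f` to at most
`‖ξ‖_{W^{m,∞}} ‖f‖²_{W^{m,2}}`.
-/

open Set
open scoped ContDiff

section PartialDeriv

variable {E E' : Type*} [NormedAddCommGroup E] [NormedSpace ℝ E]
  [NormedAddCommGroup E'] [NormedSpace ℝ E']

def partialDeriv (j : Fin 3) (F : V3 → E) : V3 → E := fun x => fderiv ℝ F x (Pi.single j 1)

lemma pd_eq_partialDeriv : pd = partialDeriv (E := V3) := rfl

lemma grad_apply (q : V3 → ℝ) (x : V3) (i : Fin 3) : grad q x i = partialDeriv i q x := rfl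

lemma contDiff_partialDeriv {F : V3 → E} (hF : ContDiff ℝ ∞ F) (j : Fin 3) :
    ContDiff ℝ ∞ (partialDeriv j F) :=
  (hF.fderiv_right le_rfl).clm_apply contDiff_const

lemma partialDeriv_const (c : E) (j : Fin 3) : partialDeriv j (fun _ => c) = 0 := by
  ext x
  simp [partialDeriv]

lemma partialDeriv_add {F G : V3 → E} (hF : Differentiable ℝ F) (hG : Differentiable ℝ G)
    (j : Fin 3) : partialDeriv j (F + G) = partialDeriv j F + partialDeriv j G := by
  ext x
  simp [partialDeriv, fderiv_add (hF x) (hG x)]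

lemma partialDeriv_sum {ι : Type*} (s : Finset ι) {A : ι → V3 → E}
    (hA : ∀ i, Differentiable ℝ (A i)) (j : Fin 3) :
    partialDeriv j (fun x => ∑ i ∈ s, A i x) = fun x => ∑ i ∈ s, partialDeriv j (A i) x := by
  ext x
  simp [partialDeriv, fderiv_fun_sum fun i _ => hA i x]

lemma differentiable_multiset_sum {ι : Type*} (M : Multiset ι) {A : ι → V3 → E}
    (hA : ∀ i, Differentiable ℝ (A i)) : Differentiable ℝ (M.map A).sum := by
  induction M using Multiset.induction_on with
  | empty => exact differentiable_const 0
  | cons i M ih => simpa using (hA i).add ih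

lemma partialDeriv_multiset_sum {ι : Type*} (M : Multiset ι) {A : ι → V3 → E}
    (hA : ∀ i, Differentiable ℝ (A i)) (j : Fin 3) :
    partialDeriv j (M.map A).sum = (M.map fun i => partialDeriv j (A i)).sum := by
  induction M using Multiset.induction_on with
  | empty => exact partialDeriv_const 0 j
  | cons i M ih =>
    simp only [Multiset.map_cons, Multiset.sum_cons]
    rw [partialDeriv_add (hA i) (differentiable_multiset_sum M hA), ih]

lemma partialDeriv_smul {c : V3 → ℝ} {F : V3 → E} (hc : Differentiable ℝ c)
    (hF : Differentiable ℝ F) (j : Fin 3) :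
    partialDeriv j (fun x => c x • F x) =
      fun x => c x • partialDeriv j F x + partialDeriv j c x • F x := by
  ext x
  simp [partialDeriv, fderiv_fun_smul (hc x) (hF x)]

lemma partialDeriv_mul {a b : V3 → ℝ} (ha : Differentiable ℝ a) (hb : Differentiable ℝ b)
    (j : Fin 3) :
    partialDeriv j (fun x => a x * b x) =
      fun x => partialDeriv j a x * b x + a x * partialDeriv j b x := by
  have h := partialDeriv_smul ha hb j
  simp only [smul_eq_mul] at h
  rw [h]
  ext x
  ring

lemma partialDeriv_clm_comp (L : E →L[ℝ] E') {F : V3 → E} (hF : Differentiable ℝ F)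
    (j : Fin 3) : partialDeriv j (fun x => L (F x)) = fun x => L (partialDeriv j F x) := by
  ext x
  have h := L.hasFDerivAt.comp x (hF x).hasFDerivAt
  simp only [Function.comp_def] at h
  simp [partialDeriv, h.fderiv]

lemma partialDeriv_apply_component {ι : Type*} [Fintype ι] {F : V3 → ι → E}
    (hF : Differentiable ℝ F) (j : Fin 3) (i : ι) :
    partialDeriv j (fun y => F y i) = fun x => partialDeriv j F x i :=
  partialDeriv_clm_comp (ContinuousLinearMap.proj i) hF j

lemma partialDeriv_comm {F : V3 → E} (hF : ContDiff ℝ 2 F) (i j : Fin 3) :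
    partialDeriv i (partialDeriv j F) = partialDeriv j (partialDeriv i F) := by
  ext1 x
  have hdiff : DifferentiableAt ℝ (fderiv ℝ F) x :=
    (hF.fderiv_right (m := 1) le_rfl).differentiable (by simp) x
  have hsecond : ∀ v w : V3,
      fderiv ℝ (fun y => fderiv ℝ F y w) x v = fderiv ℝ (fderiv ℝ F) x v w := by
    intro v w
    simp [fderiv_clm_apply hdiff (differentiableAt_const w)]
  change fderiv ℝ (fun y => fderiv ℝ F y (Pi.single j 1)) x (Pi.single i 1) =
    fderiv ℝ (fun y => fderiv ℝ F y (Pi.single i 1)) x (Pi.single j 1)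
  rw [hsecond, hsecond]
  exact (hF.contDiffAt.isSymmSndFDerivAt (by simp)).eq _ _

lemma partialDeriv_comm_of_contDiff {F : V3 → E} (hF : ContDiff ℝ ∞ F) (i j : Fin 3) :
    partialDeriv i (partialDeriv j F) = partialDeriv j (partialDeriv i F) :=
  partialDeriv_comm (hF.of_le (WithTop.coe_le_coe.2 le_top)) i j

end PartialDeriv

section MultiIndex

def unitIndex : Fin 3 → ℕ × ℕ × ℕ := ![(1, 0, 0), (0, 1, 0), (0, 0, 1)]

lemma mdeg_unitIndex (k : Fin 3) : mdeg (unitIndex k) = 1 := by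
  fin_cases k <;> rfl

lemma mdeg_add_unitIndex (α : ℕ × ℕ × ℕ) (k : Fin 3) :
    mdeg (α + unitIndex k) = mdeg α + 1 := by
  obtain ⟨a, b, c⟩ := α
  fin_cases k <;> simp [mdeg, unitIndex] <;> omega

lemma multiIndex_induction {P : ℕ × ℕ × ℕ → Prop} (zero : P 0)
    (step : ∀ α k, P α → P (α + unitIndex k)) (α : ℕ × ℕ × ℕ) : P α := by
  obtain ⟨a, b, c⟩ := α
  induction a with
  | succ a ih => exact step (a, b, c) 0 ih
  | zero =>
    induction b with
    | succ b ih => exact step (0, b, c) 1 ih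
    | zero =>
      induction c with
      | succ c ih => exact step (0, 0, c) 2 ih
      | zero => exact zero

lemma mem_midx {m : ℕ} {α : ℕ × ℕ × ℕ} : α ∈ midx m ↔ mdeg α ≤ m := by
  obtain ⟨a, b, c⟩ := α
  unfold midx mdeg
  simp only [Finset.mem_filter, Finset.mem_product, Finset.mem_range]
  omega

end MultiIndex

section IterPartial

variable {E E' : Type*} [NormedAddCommGroup E] [NormedSpace ℝ E]
  [NormedAddCommGroup E'] [NormedSpace ℝ E']

def iterPartial (α : ℕ × ℕ × ℕ) (F : V3 → E) : V3 → E :=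
  (partialDeriv 0)^[α.1] ((partialDeriv 1)^[α.2.1] ((partialDeriv 2)^[α.2.2] F))

lemma Dm_eq_iterPartial : Dm = iterPartial (E := V3) := rfl

lemma iterPartial_induction (P : (V3 → E) → Prop) (hP : ∀ j G, P G → P (partialDeriv j G))
    {F : V3 → E} (hF : P F) (α : ℕ × ℕ × ℕ) : P (iterPartial α F) :=
  Function.Iterate.rec P
    (Function.Iterate.rec P (Function.Iterate.rec P hF (hP 2) α.2.2) (hP 1) α.2.1) (hP 0) α.1

lemma contDiff_iterate_partialDeriv {F : V3 → E} (hF : ContDiff ℝ ∞ F) (j : Fin 3) (n : ℕ) :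
    ContDiff ℝ ∞ ((partialDeriv j)^[n] F) :=
  Function.Iterate.rec _ hF (fun _ h => contDiff_partialDeriv h j) n

lemma contDiff_iterPartial {F : V3 → E} (hF : ContDiff ℝ ∞ F) (α : ℕ × ℕ × ℕ) :
    ContDiff ℝ ∞ (iterPartial α F) :=
  iterPartial_induction (fun G => ContDiff ℝ ∞ G) (fun j _ h => contDiff_partialDeriv h j) hF α

lemma iterPartial_zero_fun (α : ℕ × ℕ × ℕ) : iterPartial α (0 : V3 → E) = 0 :=
  iterPartial_induction (fun G : V3 → E => G = 0)
    (fun j _ h => by rw [h]; exact partialDeriv_const (0 : E) j) rfl α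

lemma exists_iterPartial_const (c : E) (α : ℕ × ℕ × ℕ) :
    ∃ c' : E, iterPartial α (fun _ => c) = fun _ => c' :=
  iterPartial_induction (fun G : V3 → E => ∃ c', G = fun _ => c')
    (fun j _ ⟨c', h⟩ => ⟨0, by rw [h, partialDeriv_const]; rfl⟩) ⟨c, rfl⟩ α

lemma iterate_partialDeriv_commute {T : (V3 → E) → V3 → E'} {j : Fin 3}
    (hT : ∀ G, ContDiff ℝ ∞ G → T (partialDeriv j G) = partialDeriv j (T G))
    {F : V3 → E} (hF : ContDiff ℝ ∞ F) (n : ℕ) :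
    T ((partialDeriv j)^[n] F) = (partialDeriv j)^[n] (T F) := by
  induction n generalizing F with
  | zero => rfl
  | succ n ih =>
    rw [Function.iterate_succ_apply, Function.iterate_succ_apply,
      ih (contDiff_partialDeriv hF j), hT F hF]

lemma iterPartial_commute {T : (V3 → E) → V3 → E'}
    (hT : ∀ j G, ContDiff ℝ ∞ G → T (partialDeriv j G) = partialDeriv j (T G))
    {F : V3 → E} (hF : ContDiff ℝ ∞ F) (α : ℕ × ℕ × ℕ) :
    T (iterPartial α F) = iterPartial α (T F) := by
  have hF2 := contDiff_iterate_partialDeriv hF 2 α.2.2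
  rw [iterPartial, iterate_partialDeriv_commute (hT 0) (contDiff_iterate_partialDeriv hF2 1 _),
    iterate_partialDeriv_commute (hT 1) hF2, iterate_partialDeriv_commute (hT 2) hF]
  rfl

lemma iterate_partialDeriv_partialDeriv {F : V3 → E} (hF : ContDiff ℝ ∞ F) (i j : Fin 3)
    (n : ℕ) :
    (partialDeriv i)^[n] (partialDeriv j F) = partialDeriv j ((partialDeriv i)^[n] F) :=
  (iterate_partialDeriv_commute (fun _ hG => partialDeriv_comm_of_contDiff hG j i) hF n).symm

lemma iterPartial_partialDeriv {F : V3 → E} (hF : ContDiff ℝ ∞ F) (k : Fin 3)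
    (α : ℕ × ℕ × ℕ) : iterPartial α (partialDeriv k F) = partialDeriv k (iterPartial α F) :=
  (iterPartial_commute (fun j _ hG => partialDeriv_comm_of_contDiff hG k j) hF α).symm

lemma iterPartial_add_unitIndex {F : V3 → E} (hF : ContDiff ℝ ∞ F) (α : ℕ × ℕ × ℕ)
    (k : Fin 3) : iterPartial (α + unitIndex k) F = partialDeriv k (iterPartial α F) := by
  obtain ⟨a, b, c⟩ := α
  have hF2 := contDiff_iterate_partialDeriv hF 2 c
  fin_cases k
  · exact Function.iterate_succ_apply' _ _ _
  · change (partialDeriv 0)^[a] ((partialDeriv 1)^[b + 1] ((partialDeriv 2)^[c] F)) =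
      partialDeriv 1 ((partialDeriv 0)^[a] ((partialDeriv 1)^[b] ((partialDeriv 2)^[c] F)))
    rw [Function.iterate_succ_apply',
      iterate_partialDeriv_partialDeriv (contDiff_iterate_partialDeriv hF2 1 b)]
  · change (partialDeriv 0)^[a] ((partialDeriv 1)^[b] ((partialDeriv 2)^[c + 1] F)) =
      partialDeriv 2 ((partialDeriv 0)^[a] ((partialDeriv 1)^[b] ((partialDeriv 2)^[c] F)))
    rw [Function.iterate_succ_apply', iterate_partialDeriv_partialDeriv hF2,
      iterate_partialDeriv_partialDeriv (contDiff_iterate_partialDeriv hF2 1 b)]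

lemma iterPartial_clm_comp (L : E →L[ℝ] E') {F : V3 → E} (hF : ContDiff ℝ ∞ F)
    (α : ℕ × ℕ × ℕ) : iterPartial α (fun x => L (F x)) = fun x => L (iterPartial α F x) :=
  (iterPartial_commute (T := fun G x => L (G x))
    (fun j _ hG => (partialDeriv_clm_comp L (hG.differentiable (by simp)) j).symm) hF α).symm

lemma iterPartial_apply_component {ι : Type*} [Fintype ι] {F : V3 → ι → E}
    (hF : ContDiff ℝ ∞ F) (α : ℕ × ℕ × ℕ) (i : ι) :
    iterPartial α (fun y => F y i) = fun x => iterPartial α F x i :=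
  iterPartial_clm_comp (ContinuousLinearMap.proj i) hF α

lemma iterPartial_sum {ι : Type*} [Fintype ι] {A : ι → V3 → E}
    (hA : ∀ i, ContDiff ℝ ∞ (A i)) (α : ℕ × ℕ × ℕ) :
    iterPartial α (fun x => ∑ i, A i x) = fun x => ∑ i, iterPartial α (A i) x := by
  have hH : ContDiff ℝ ∞ (fun x i => A i x) := contDiff_pi.2 hA
  simpa [iterPartial_apply_component hH α] using
    iterPartial_clm_comp (∑ i, ContinuousLinearMap.proj i) hH α

lemma iterPartial_add {F G : V3 → E} (hF : ContDiff ℝ ∞ F) (hG : ContDiff ℝ ∞ G)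
    (α : ℕ × ℕ × ℕ) : iterPartial α (F + G) = iterPartial α F + iterPartial α G := by
  have h := iterPartial_sum (A := ![F, G]) (Fin.forall_fin_two.2 ⟨hF, hG⟩) α
  simp only [Fin.sum_univ_two, Matrix.cons_val_zero, Matrix.cons_val_one] at h
  exact h

end IterPartial

section Periodic

def LatticePeriodic {X : Type*} (F : V3 → X) : Prop :=
  ∀ (x : V3) (k : Fin 3 → ℤ), F (x + fun i => (k i : ℝ)) = F x

lemma LatticePeriodic.apply_add_single {X : Type*} {F : V3 → X} (hF : LatticePeriodic F)
    (x : V3) (i : Fin 3) : F (x + Pi.single i 1) = F x := by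
  have hk : (fun l => ((Pi.single i 1 : Fin 3 → ℤ) l : ℝ)) = Pi.single i 1 := by
    ext l
    by_cases h : l = i <;> simp [h]
  simpa [hk] using hF x (Pi.single i 1)

variable {E : Type*} [NormedAddCommGroup E] [NormedSpace ℝ E]

lemma latticePeriodic_partialDeriv {F : V3 → E} (hF : LatticePeriodic F) (j : Fin 3) :
    LatticePeriodic (partialDeriv j F) := by
  intro x k
  have h : (fun y => F (y + fun i => (k i : ℝ))) = F := funext fun y => hF y k
  simp only [partialDeriv, ← fderiv_comp_add_right, h]

lemma latticePeriodic_iterPartial {F : V3 → E} (hF : LatticePeriodic F) (α : ℕ × ℕ × ℕ) :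
    LatticePeriodic (iterPartial α F) :=
  iterPartial_induction LatticePeriodic (fun j _ h => latticePeriodic_partialDeriv h j) hF α

end Periodic

section Cube

variable {E : Type*} [NormedAddCommGroup E]

lemma measurableSet_cube : MeasurableSet cube :=
  MeasurableSet.univ_pi fun _ => measurableSet_Ico

lemma cube_ae_eq_Icc : cube =ᵐ[volume] Icc (0 : V3) 1 :=
  Measure.univ_pi_Ico_ae_eq_Icc

lemma exists_mem_cube_add_intCast (x : V3) :
    ∃ y ∈ cube, ∃ k : Fin 3 → ℤ, x = y + fun i => (k i : ℝ) :=
  ⟨fun i => Int.fract (x i), fun _ _ => ⟨Int.fract_nonneg _, Int.fract_lt_one _⟩,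
    fun i => ⌊x i⌋, funext fun i => (Int.fract_add_floor (x i)).symm⟩

lemma LatticePeriodic.bddAbove_range_norm {F : V3 → E} (hF : LatticePeriodic F)
    (hc : Continuous F) : BddAbove (range fun x => ‖F x‖) := by
  obtain ⟨C, hC⟩ := (isCompact_univ_pi fun _ : Fin 3 => isCompact_Icc (a := (0 : ℝ)) (b := 1)
    ).exists_bound_of_continuousOn hc.continuousOn
  refine ⟨C, ?_⟩
  rintro _ ⟨x, rfl⟩
  obtain ⟨y, hy, k, rfl⟩ := exists_mem_cube_add_intCast x
  change ‖F (y + _)‖ ≤ C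
  rw [hF y k]
  exact hC y fun i _ => Ico_subset_Icc_self (hy i (mem_univ i))

lemma integrableOn_cube {F : V3 → E} (hF : Continuous F) : IntegrableOn F cube :=
  (hF.continuousOn.integrableOn_Icc).congr_set_ae cube_ae_eq_Icc

variable [NormedSpace ℝ E]

/-- The boundary terms of the divergence theorem on `[0,1]³` cancel in pairs by periodicity. -/
theorem integral_cube_divergence_eq_zero {F : Fin 3 → V3 → E}
    (hF : ∀ i, ContDiff ℝ 1 (F i)) (hp : ∀ i, LatticePeriodic (F i)) :
    ∫ x in cube, ∑ i, partialDeriv i (F i) x = 0 := by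
  rw [setIntegral_congr_set cube_ae_eq_Icc]
  refine (integral_divergence_of_hasFDerivAt_off_countable' 0 1 zero_le_one F
    (fun i x => fderiv ℝ (F i) x) ∅ countable_empty (fun i => (hF i).continuous.continuousOn)
    (fun x _ i => ((hF i).differentiable one_ne_zero x).hasFDerivAt) ?_).trans ?_
  · exact (continuous_finsetSum _ fun i _ => ((hF i).continuous_fderiv one_ne_zero).clm_apply
      continuous_const).continuousOn.integrableOn_Icc
  · refine Finset.sum_eq_zero fun i _ => sub_eq_zero.2 (setIntegral_congr_fun
      measurableSet_Icc fun y _ => ?_)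
    have hshift : (Fin.insertNth i (1 : ℝ) y : V3) = Fin.insertNth i 0 y + Pi.single i 1 := by
      rw [← sub_eq_iff_eq_add', Fin.insertNth_sub_same, sub_zero]
    simp only [Pi.one_apply, Pi.zero_apply]
    rw [hshift, (hp i).apply_add_single]

theorem integral_cube_partialDeriv_eq_zero {F : V3 → E} (hF : ContDiff ℝ 1 F)
    (hp : LatticePeriodic F) (j : Fin 3) : ∫ x in cube, partialDeriv j F x = 0 := by
  have hsingle : ∀ i, Pi.single (M := fun _ => V3 → E) j F i = if i = j then F else 0 := by
    intro i
    by_cases h : i = j <;> simp [h]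
  have h := integral_cube_divergence_eq_zero (F := Pi.single j F)
    (fun i => by rw [hsingle]; split_ifs; exacts [hF, contDiff_const])
    (fun i => by rw [hsingle]; split_ifs; exacts [hp, fun _ _ => rfl])
  have hsum : ∀ x, ∑ i, partialDeriv i (Pi.single (M := fun _ => V3 → E) j F i) x =
      partialDeriv j F x := by
    intro x
    rw [Finset.sum_eq_single j (fun i _ hi => by simp [hi, partialDeriv]) (by simp)]
    simp
  simpa only [hsum] using h

lemma integral_cube_iterPartial_eq_zero {F : V3 → E} (hF : ContDiff ℝ ∞ F)
    (hp : LatticePeriodic F) (h0 : ∫ x in cube, F x = 0) (α : ℕ × ℕ × ℕ) :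
    ∫ x in cube, iterPartial α F x = 0 := by
  induction α using multiIndex_induction with
  | zero => exact h0
  | step β k _ =>
    rw [iterPartial_add_unitIndex hF]
    exact integral_cube_partialDeriv_eq_zero ((contDiff_iterPartial hF β).of_le (by simp))
      (latticePeriodic_iterPartial hp β) k

end Cube

section VectorFields

lemma contDiff_grad {q : V3 → ℝ} (hq : ContDiff ℝ ∞ q) : ContDiff ℝ ∞ (grad q) :=
  contDiff_pi.2 fun i => contDiff_partialDeriv hq i

lemma iterPartial_grad {q : V3 → ℝ} (hq : ContDiff ℝ ∞ q) (α : ℕ × ℕ × ℕ) :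
    iterPartial α (grad q) = grad (iterPartial α q) := by
  ext x i
  rw [← congrFun (iterPartial_apply_component (contDiff_grad hq) α i) x]
  exact congrFun (iterPartial_partialDeriv hq i α) x

lemma divFree_iterPartial {F : VF} (hF : ContDiff ℝ ∞ F) (hdiv : DivFree F)
    (α : ℕ × ℕ × ℕ) : DivFree (iterPartial α F) := by
  intro x
  have hterm : ∀ j, pd j (iterPartial α F) x j =
      iterPartial α (fun y => partialDeriv j F y j) x := fun j => by
    rw [pd_eq_partialDeriv, ← iterPartial_partialDeriv hF,
      iterPartial_apply_component (contDiff_partialDeriv hF j)]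
  have hzero : (fun y => ∑ j, partialDeriv j F y j) = 0 := funext hdiv
  simp only [hterm]
  rw [← congrFun (iterPartial_sum (fun j => contDiff_pi.1 (contDiff_partialDeriv hF j) j) α) x,
    hzero, iterPartial_zero_fun]
  rfl

lemma contDiff_transport {ξ f : VF} (hξ : ContDiff ℝ ∞ ξ) (hf : ContDiff ℝ ∞ f) :
    ContDiff ℝ ∞ (transport ξ f) :=
  ContDiff.sum fun j _ => (contDiff_pi.1 hξ j).smul (contDiff_partialDeriv hf j)

end VectorFields

section L2

lemma continuous_sum_mul {F G : VF} (hF : Continuous F) (hG : Continuous G) :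
    Continuous fun x => ∑ i, F x i * G x i :=
  continuous_finsetSum _ fun i _ =>
    ((continuous_apply i).comp hF).mul ((continuous_apply i).comp hG)

lemma continuous_multiset_sum_map {ι : Type*} (M : Multiset ι) {A : ι → VF}
    (hA : ∀ i, Continuous (A i)) : Continuous (M.map A).sum := by
  induction M using Multiset.induction_on with
  | empty => exact continuous_const
  | cons i M ih => simpa using (hA i).add ih

lemma L2inner_self_nonneg (F : VF) : 0 ≤ L2inner F F :=
  setIntegral_nonneg measurableSet_cube fun _ _ =>
    Finset.sum_nonneg fun _ _ => mul_self_nonneg _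

lemma L2inner_add_left {F G H : VF} (hF : Continuous F) (hG : Continuous G)
    (hH : Continuous H) : L2inner (F + G) H = L2inner F H + L2inner G H := by
  simp only [L2inner, Pi.add_apply, add_mul, Finset.sum_add_distrib]
  exact integral_add (integrableOn_cube (continuous_sum_mul hF hH))
    (integrableOn_cube (continuous_sum_mul hG hH))

lemma L2inner_multiset_sum_left {ι : Type*} (M : Multiset ι) {A : ι → VF}
    (hA : ∀ i, Continuous (A i)) {H : VF} (hH : Continuous H) :
    L2inner (M.map A).sum H = (M.map fun i => L2inner (A i) H).sum := by
  induction M using Multiset.induction_on with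
  | empty => simp [L2inner]
  | cons i M ih =>
    simp only [Multiset.map_cons, Multiset.sum_cons]
    rw [L2inner_add_left (hA i) (continuous_multiset_sum_map M hA) hH, ih]

lemma L2inner_const_left_eq_zero (c : V3) {G : VF} (hG : Continuous G)
    (h0 : ∫ x in cube, G x = 0) : L2inner (fun _ => c) G = 0 := by
  have hcomp : ∀ i, ∫ x in cube, G x i = 0 := fun i => by
    simpa [h0] using (ContinuousLinearMap.proj (R := ℝ) (φ := fun _ : Fin 3 => ℝ) i
      ).integral_comp_comm (integrableOn_cube hG)
  rw [L2inner, integral_finsetSum _ fun i _ =>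
    (integrableOn_cube (F := fun x => G x i) ((continuous_apply i).comp hG)).const_mul (c i)]
  simp [integral_const_mul, hcomp]

/-- `|a G · H| ≤ |a| (|G|² + |H|²) / 2` pointwise. -/
lemma abs_L2inner_smul_left_le {a : V3 → ℝ} {G H : VF} (hG : Continuous G)
    (hH : Continuous H) {M : ℝ} (hM : ∀ x, |a x| ≤ M) :
    |L2inner (fun x => a x • G x) H| ≤ M / 2 * (L2inner G G + L2inner H H) := by
  have hpoint : ∀ x, ‖∑ i, (a x • G x) i * H x i‖ ≤
      M / 2 * ((∑ i, G x i * G x i) + ∑ i, H x i * H x i) := by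
    intro x
    have hGH : |∑ i, G x i * H x i| ≤
        ((∑ i, G x i * G x i) + ∑ i, H x i * H x i) / 2 := by
      simp only [Fin.sum_univ_three]
      refine abs_le.2 ⟨?_, ?_⟩ <;>
      nlinarith [sq_nonneg (G x 0 + H x 0), sq_nonneg (G x 1 + H x 1),
        sq_nonneg (G x 2 + H x 2), sq_nonneg (G x 0 - H x 0), sq_nonneg (G x 1 - H x 1),
        sq_nonneg (G x 2 - H x 2)]
    have hsum : ∑ i, (a x • G x) i * H x i = a x * ∑ i, G x i * H x i := by
      simp [Finset.mul_sum, mul_assoc]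
    rw [Real.norm_eq_abs, hsum, abs_mul]
    calc |a x| * |∑ i, G x i * H x i|
        ≤ M * (((∑ i, G x i * G x i) + ∑ i, H x i * H x i) / 2) :=
          mul_le_mul (hM x) hGH (abs_nonneg _) ((abs_nonneg _).trans (hM x))
      _ = _ := by ring
  have hGG := integrableOn_cube (continuous_sum_mul hG hG)
  have hHH := integrableOn_cube (continuous_sum_mul hH hH)
  calc |L2inner (fun x => a x • G x) H|
      ≤ ∫ x in cube, M / 2 * ((∑ i, G x i * G x i) + ∑ i, H x i * H x i) :=
        norm_integral_le_of_norm_le ((hGG.add hHH).const_mul _)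
          (Filter.Eventually.of_forall hpoint)
    _ = M / 2 * (L2inner G G + L2inner H H) := by
        rw [integral_const_mul, integral_add hGG hHH]
        rfl

end L2

section Orthogonality

lemma L2inner_grad_eq_zero {q : V3 → ℝ} {w : VF} (hq : ContDiff ℝ ∞ q)
    (hqp : LatticePeriodic q) (hw : ContDiff ℝ ∞ w) (hwp : LatticePeriodic w)
    (hdiv : DivFree w) : L2inner (grad q) w = 0 := by
  have hwi : ∀ i, ContDiff ℝ ∞ fun y => w y i := contDiff_pi.1 hw
  have hdiverg : ∀ x,
      ∑ i, grad q x i * w x i = ∑ i, partialDeriv i (fun y => q y * w y i) x := by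
    intro x
    simp only [partialDeriv_mul (hq.differentiable (by simp)) ((hwi _).differentiable (by simp)),
      partialDeriv_apply_component (hw.differentiable (by simp)), Finset.sum_add_distrib,
      ← Finset.mul_sum, grad_apply]
    rw [← pd_eq_partialDeriv, hdiv x, mul_zero, add_zero]
  rw [L2inner, setIntegral_congr_fun measurableSet_cube fun x _ => hdiverg x]
  exact integral_cube_divergence_eq_zero (fun i => (hq.mul (hwi i)).of_le (by simp))
    fun i x k => by simp only [hqp x k, hwp x k]

/-- Since `ξ` is divergence-free, `2 (𝓛_ξ h) · h = ∑ⱼ ∂ⱼ (ξʲ |h|²)`. -/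
lemma L2inner_transport_self_eq_zero {ξ h : VF} (hξ : ContDiff ℝ ∞ ξ)
    (hξp : LatticePeriodic ξ) (hdiv : DivFree ξ) (hh : ContDiff ℝ ∞ h)
    (hhp : LatticePeriodic h) : L2inner (transport ξ h) h = 0 := by
  set Q : V3 → ℝ := fun y => ∑ i, h y i * h y i with hQdef
  have hhi : ∀ i, ContDiff ℝ ∞ fun y => h y i := contDiff_pi.1 hh
  have hξi : ∀ i, ContDiff ℝ ∞ fun y => ξ y i := contDiff_pi.1 hξ
  have hQ : ContDiff ℝ ∞ Q := ContDiff.sum fun i _ => (hhi i).mul (hhi i)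
  have hQp : LatticePeriodic Q := fun x k => by simp only [hQdef, hhp x k]
  have hpartialQ : ∀ j x, partialDeriv j Q x = 2 * ∑ i, partialDeriv j h x i * h x i := by
    intro j x
    rw [hQdef, partialDeriv_sum _ (fun i => ((hhi i).mul (hhi i)).differentiable (by simp)),
      Finset.mul_sum]
    refine Finset.sum_congr rfl fun i _ => ?_
    rw [partialDeriv_mul ((hhi i).differentiable (by simp)) ((hhi i).differentiable (by simp)),
      partialDeriv_apply_component (hh.differentiable (by simp))]
    ring
  have hdiverg : ∀ x, ∑ i, transport ξ h x i * h x i =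
      (1 / 2) * ∑ j, partialDeriv j (fun y => ξ y j * Q y) x := by
    intro x
    simp only [partialDeriv_mul ((hξi _).differentiable (by simp)) (hQ.differentiable (by simp)),
      partialDeriv_apply_component (hξ.differentiable (by simp)), Finset.sum_add_distrib,
      ← Finset.sum_mul, hpartialQ]
    rw [← pd_eq_partialDeriv, hdiv x, zero_mul, zero_add]
    simp only [transport, Finset.sum_apply, Pi.smul_apply, smul_eq_mul, Finset.mul_sum,
      Finset.sum_mul, pd_eq_partialDeriv]
    rw [Finset.sum_comm]
    exact Finset.sum_congr rfl fun j _ => Finset.sum_congr rfl fun i _ => by ring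
  rw [L2inner, setIntegral_congr_fun measurableSet_cube fun x _ => hdiverg x,
    integral_const_mul, integral_cube_divergence_eq_zero
      (fun j => ((hξi j).mul hQ).of_le (by simp)) fun j x k => by simp only [hξp x k, hQp x k],
    mul_zero]

lemma L2inner_iterPartial_of_isLeray {u g f : VF} (hg : IsLeray u g) (hf : GoodField f)
    (α : ℕ × ℕ × ℕ) :
    L2inner (iterPartial α g) (iterPartial α f) =
      L2inner (iterPartial α u) (iterPartial α f) := by
  obtain ⟨-, hgs, -, -, p, c, hpp, hps, hgrad⟩ := hg
  obtain ⟨hfp, hfs, hfdiv, hf0⟩ := hf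
  have hu : u = g + (grad p + fun _ => c) := funext fun x => sub_eq_iff_eq_add'.1 (hgrad x)
  have hr : ContDiff ℝ ∞ (grad p + fun _ => c) := (contDiff_grad hps).add contDiff_const
  obtain ⟨c', hc'⟩ := exists_iterPartial_const c α
  have hDp := contDiff_iterPartial hps α
  have hDf := contDiff_iterPartial hfs α
  rw [hu, iterPartial_add hgs hr, iterPartial_add (contDiff_grad hps) contDiff_const,
    iterPartial_grad hps, hc',
    L2inner_add_left (contDiff_iterPartial hgs α).continuous
      ((contDiff_grad hDp).continuous.add continuous_const) hDf.continuous,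
    L2inner_add_left (contDiff_grad hDp).continuous continuous_const hDf.continuous,
    L2inner_grad_eq_zero hDp (latticePeriodic_iterPartial hpp α) hDf
      (latticePeriodic_iterPartial hfp α) (divFree_iterPartial hfs hfdiv α),
    L2inner_const_left_eq_zero c' hDf.continuous
      (integral_cube_iterPartial_eq_zero hfs hfp hf0 α), add_zero, add_zero]

end Orthogonality

section SobolevNorms

lemma sobNormSq_nonneg (m : ℕ) (f : VF) : 0 ≤ sobNormSq m f :=
  Finset.sum_nonneg fun _ _ => L2inner_self_nonneg _

lemma L2inner_self_le_sobNormSq {m : ℕ} {α : ℕ × ℕ × ℕ} (hα : mdeg α ≤ m) (f : VF) :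
    L2inner (iterPartial α f) (iterPartial α f) ≤ sobNormSq m f :=
  Finset.single_le_sum (f := fun α => L2inner (Dm α f) (Dm α f))
    (fun _ _ => L2inner_self_nonneg _) (mem_midx.2 hα)

lemma WinfNorm_nonneg (m : ℕ) (ξ : VF) : 0 ≤ WinfNorm m ξ :=
  (Real.iSup_nonneg fun _ => norm_nonneg _).trans
    (Finset.le_sup' (f := fun α => ⨆ x, ‖Dm α ξ x‖) ((mem_midx (α := (0, 0, 0))).2 m.zero_le))

lemma norm_iterPartial_le_WinfNorm {ξ : VF} (hξ : ContDiff ℝ ∞ ξ) (hp : LatticePeriodic ξ)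
    {m : ℕ} {α : ℕ × ℕ × ℕ} (hα : mdeg α ≤ m) (x : V3) :
    ‖iterPartial α ξ x‖ ≤ WinfNorm m ξ :=
  (le_ciSup ((latticePeriodic_iterPartial hp α).bddAbove_range_norm
      (contDiff_iterPartial hξ α).continuous) x).trans
    (Finset.le_sup' (f := fun α => ⨆ x, ‖Dm α ξ x‖) (mem_midx.2 hα))

end SobolevNorms

section Commutator

structure CommIndex where
  β : ℕ × ℕ × ℕ
  γ : ℕ × ℕ × ℕ
  j : Fin 3

def commTerm (ξ f : VF) (t : CommIndex) : VF :=
  fun x => iterPartial t.β ξ x t.j • partialDeriv t.j (iterPartial t.γ f) x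

variable {ξ f : VF}

lemma contDiff_commTerm (hξ : ContDiff ℝ ∞ ξ) (hf : ContDiff ℝ ∞ f) (t : CommIndex) :
    ContDiff ℝ ∞ (commTerm ξ f t) :=
  (contDiff_pi.1 (contDiff_iterPartial hξ t.β) t.j).smul
    (contDiff_partialDeriv (contDiff_iterPartial hf t.γ) t.j)

lemma transport_iterPartial (ξ f : VF) (γ : ℕ × ℕ × ℕ) :
    transport ξ (iterPartial γ f) = fun x => ∑ j, commTerm ξ f ⟨0, γ, j⟩ x := by
  ext x
  simp only [transport, pd_eq_partialDeriv, Finset.sum_apply, Pi.smul_apply, smul_eq_mul,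
    commTerm]
  rfl

lemma partialDeriv_commTerm (hξ : ContDiff ℝ ∞ ξ) (hf : ContDiff ℝ ∞ f) (k : Fin 3)
    (t : CommIndex) :
    partialDeriv k (commTerm ξ f t) =
      commTerm ξ f ⟨t.β, t.γ + unitIndex k, t.j⟩ + commTerm ξ f ⟨t.β + unitIndex k, t.γ, t.j⟩ := by
  obtain ⟨β, γ, j⟩ := t
  have hDξ := contDiff_iterPartial hξ β
  have hDf := contDiff_iterPartial hf γ
  change partialDeriv k (fun x => iterPartial β ξ x j • partialDeriv j (iterPartial γ f) x) = _
  rw [partialDeriv_smul ((contDiff_pi.1 hDξ j).differentiable (by simp))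
      ((contDiff_partialDeriv hDf j).differentiable (by simp)),
    partialDeriv_apply_component (hDξ.differentiable (by simp)),
    partialDeriv_comm_of_contDiff hDf k j,
    ← iterPartial_add_unitIndex hf, ← iterPartial_add_unitIndex hξ]
  rfl

lemma partialDeriv_transport_iterPartial (hξ : ContDiff ℝ ∞ ξ) (hf : ContDiff ℝ ∞ f)
    (k : Fin 3) (γ : ℕ × ℕ × ℕ) :
    partialDeriv k (transport ξ (iterPartial γ f)) =
      transport ξ (iterPartial (γ + unitIndex k) f) +
        fun x => ∑ j, commTerm ξ f ⟨unitIndex k, γ, j⟩ x := by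
  rw [transport_iterPartial, transport_iterPartial, partialDeriv_sum _ (fun j =>
    (contDiff_commTerm hξ hf _).differentiable (by simp))]
  ext x
  simp [partialDeriv_commTerm hξ hf, Finset.sum_add_distrib]

theorem exists_iterPartial_transport_eq (hξ : ContDiff ℝ ∞ ξ) (hf : ContDiff ℝ ∞ f)
    (α : ℕ × ℕ × ℕ) :
    ∃ M : Multiset CommIndex, Multiset.card M ≤ 5 ^ mdeg α ∧
      (∀ t ∈ M, 1 ≤ mdeg t.β ∧ mdeg t.β + mdeg t.γ ≤ mdeg α) ∧
      iterPartial α (transport ξ f) =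
        transport ξ (iterPartial α f) + (M.map (commTerm ξ f)).sum := by
  induction α using multiIndex_induction with
  | zero =>
    exact ⟨0, by simp, by simp, by simp only [Multiset.map_zero, Multiset.sum_zero, add_zero]; rfl⟩
  | step α k ih =>
    obtain ⟨M, hcard, hdeg, hM⟩ := ih
    refine ⟨Finset.univ.val.map (fun j => ⟨unitIndex k, α, j⟩) +
      M.map (fun t => ⟨t.β, t.γ + unitIndex k, t.j⟩) +
      M.map (fun t => ⟨t.β + unitIndex k, t.γ, t.j⟩), ?_, ?_, ?_⟩
    · simp only [Multiset.card_add, Multiset.card_map, Finset.card_val, Finset.card_univ,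
        Fintype.card_fin, mdeg_add_unitIndex, pow_succ]
      have := Nat.one_le_pow (mdeg α) 5 (by norm_num)
      omega
    · simp only [Multiset.mem_add, Multiset.mem_map, Finset.mem_val, Finset.mem_univ, true_and,
        mdeg_add_unitIndex]
      rintro t ((⟨j, rfl⟩ | ⟨s, hs, rfl⟩) | ⟨s, hs, rfl⟩)
      · simp [mdeg_unitIndex, add_comm]
      all_goals
        have := hdeg s hs
        simp only [mdeg_add_unitIndex]
        omega
    · have hterm := fun t => (contDiff_commTerm hξ hf t).differentiable (by simp)
      rw [iterPartial_add_unitIndex (contDiff_transport hξ hf), hM,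
        partialDeriv_add ((contDiff_transport hξ (contDiff_iterPartial hf α)).differentiable
          (by simp)) (differentiable_multiset_sum M hterm),
        partialDeriv_transport_iterPartial hξ hf, partialDeriv_multiset_sum M hterm]
      simp only [partialDeriv_commTerm hξ hf, Multiset.sum_map_add, Multiset.map_add,
        Multiset.sum_add, Multiset.map_map, Function.comp_def, Finset.sum_map_val,
        ← Finset.sum_fn]
      abel

end Commutator

section Estimates

variable {ξ f : VF} {m : ℕ}

lemma abs_L2inner_commTerm_le (hξ : ContDiff ℝ ∞ ξ) (hξp : LatticePeriodic ξ)
    (hf : ContDiff ℝ ∞ f) {t : CommIndex} (hβ : mdeg t.β ≤ m) (hγ : mdeg t.γ + 1 ≤ m)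
    {α : ℕ × ℕ × ℕ} (hα : mdeg α ≤ m) :
    |L2inner (commTerm ξ f t) (iterPartial α f)| ≤ WinfNorm m ξ * sobNormSq m f := by
  have h := abs_L2inner_smul_left_le
    (contDiff_partialDeriv (contDiff_iterPartial hf t.γ) t.j).continuous
    (contDiff_iterPartial hf α).continuous fun x =>
      (norm_le_pi_norm (iterPartial t.β ξ x) t.j).trans
        (norm_iterPartial_le_WinfNorm hξ hξp hβ x)
  have hG : L2inner (partialDeriv t.j (iterPartial t.γ f))
      (partialDeriv t.j (iterPartial t.γ f)) ≤ sobNormSq m f := by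
    rw [← iterPartial_add_unitIndex hf]
    exact L2inner_self_le_sobNormSq (by rw [mdeg_add_unitIndex]; exact hγ) f
  calc |L2inner (commTerm ξ f t) (iterPartial α f)|
      ≤ WinfNorm m ξ / 2 * (sobNormSq m f + sobNormSq m f) :=
        h.trans (mul_le_mul_of_nonneg_left (add_le_add hG (L2inner_self_le_sobNormSq hα f))
          (div_nonneg (WinfNorm_nonneg m ξ) zero_le_two))
    _ = WinfNorm m ξ * sobNormSq m f := by ring

lemma abs_L2inner_iterPartial_transport_le (hξ : ContDiff ℝ ∞ ξ) (hξp : LatticePeriodic ξ)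
    (hξdiv : DivFree ξ) (hf : ContDiff ℝ ∞ f) (hfp : LatticePeriodic f)
    {α : ℕ × ℕ × ℕ} (hα : mdeg α ≤ m) :
    |L2inner (iterPartial α (transport ξ f)) (iterPartial α f)| ≤
      5 ^ m * (WinfNorm m ξ * sobNormSq m f) := by
  obtain ⟨M, hcard, hdeg, hM⟩ := exists_iterPartial_transport_eq hξ hf α
  have hDf := contDiff_iterPartial hf α
  have hterm : ∀ t, Continuous (commTerm ξ f t) := fun t => (contDiff_commTerm hξ hf t).continuous
  rw [hM, L2inner_add_left (contDiff_transport hξ hDf).continuous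
      (continuous_multiset_sum_map M hterm) hDf.continuous,
    L2inner_transport_self_eq_zero hξ hξp hξdiv hDf (latticePeriodic_iterPartial hfp α),
    zero_add, L2inner_multiset_sum_left M hterm hDf.continuous]
  calc |(M.map fun t => L2inner (commTerm ξ f t) (iterPartial α f)).sum|
      ≤ ((M.map fun t => L2inner (commTerm ξ f t) (iterPartial α f)).map abs).sum :=
        Multiset.abs_sum_le_sum_abs
    _ ≤ Multiset.card M • (WinfNorm m ξ * sobNormSq m f) := by
        refine (Multiset.sum_le_card_nsmul _ _ fun r hr => ?_).trans_eq
          (by rw [Multiset.card_map, Multiset.card_map])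
        simp only [Multiset.map_map, Function.comp_apply, Multiset.mem_map] at hr
        obtain ⟨t, ht, rfl⟩ := hr
        have := hdeg t ht
        exact abs_L2inner_commTerm_le hξ hξp hf (by omega) (by omega) hα
    _ ≤ 5 ^ m * (WinfNorm m ξ * sobNormSq m f) := by
        rw [nsmul_eq_mul]
        gcongr
        · exact mul_nonneg (WinfNorm_nonneg m ξ) (sobNormSq_nonneg m f)
        · exact_mod_cast hcard.trans (Nat.pow_le_pow_right (by norm_num) hα)

theorem abs_sobInner_le_of_isLeray_transport {g : VF} (hξ : ContDiff ℝ ∞ ξ)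
    (hξp : LatticePeriodic ξ) (hξdiv : DivFree ξ) (hf : GoodField f)
    (hg : IsLeray (transport ξ f) g) (m : ℕ) :
    |sobInner m g f| ≤ (midx m).card * 5 ^ m * (WinfNorm m ξ * sobNormSq m f) := by
  rw [sobInner, Dm_eq_iterPartial]
  calc |∑ α ∈ midx m, L2inner (iterPartial α g) (iterPartial α f)|
      ≤ ∑ α ∈ midx m, |L2inner (iterPartial α g) (iterPartial α f)| :=
        Finset.abs_sum_le_sum_abs _ _
    _ ≤ ∑ _α ∈ midx m, 5 ^ m * (WinfNorm m ξ * sobNormSq m f) :=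
        Finset.sum_le_sum fun α hα => by
          rw [L2inner_iterPartial_of_isLeray hg hf]
          exact abs_L2inner_iterPartial_transport_le hξ hξp hξdiv hf.2.1 hf.1 (mem_midx.1 hα)
    _ = (midx m).card * 5 ^ m * (WinfNorm m ξ * sobNormSq m f) := by
        rw [Finset.sum_const, nsmul_eq_mul, mul_assoc]

end Estimates

theorem stmt7_general (m : ℕ) :
    ∃ C : ℝ, ∀ ξ f g : VF, GoodField ξ → GoodField f →
      IsLeray (transport ξ f) g →
      (sobInner m g f) ^ 2 ≤
        C * WinfNorm m ξ ^ 2 * (sobNormSq m f) ^ 2 := by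
  refine ⟨((midx m).card * 5 ^ m) ^ 2, fun ξ f g hξ hf hg => ?_⟩
  obtain ⟨hξp, hξs, hξdiv, -⟩ := hξ
  calc sobInner m g f ^ 2 = |sobInner m g f| ^ 2 := (sq_abs _).symm
    _ ≤ ((midx m).card * 5 ^ m * (WinfNorm m ξ * sobNormSq m f)) ^ 2 :=
        pow_le_pow_left₀ (abs_nonneg _)
          (abs_sobInner_le_of_isLeray_transport hξs hξp hξdiv hf hg m) 2
    _ = ((midx m).card * 5 ^ m) ^ 2 * WinfNorm m ξ ^ 2 * sobNormSq m f ^ 2 := by ring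

/-- Proposition 2.5, second inequality. -/
theorem stmt7 (m : ℕ) (hm : 1 ≤ m) :
    ∃ C : ℝ, ∀ ξ f g : VF, GoodField ξ → GoodField f →
      IsLeray (transport ξ f) g →
      (sobInner m g f) ^ 2 ≤
        C * WinfNorm m ξ ^ 2 * (sobNormSq m f) ^ 2 :=
  stmt7_general m
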